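/- For any subset D of a finite set br with inconsistency predicate Bot, if D is a minimal s-diagnosis, then for every x ∈ D there exists a minimal s-inconsistency explanation E with x ∈ E; consequently ⋃ D⁻_m(M) ⊆ ⋃ E⁺_m(M). -/

import Mathlib

/-!
If `D` is a minimal s-diagnosis and `x ∈ D`, then every `R` with `br \ (D \ {x}) ⊆ R ⊆ br` is
inconsistent, since otherwise `br \ R` would be an s-diagnosis strictly inside `D`. So
`br \ (D \ {x})` is an s-explanation and contains a minimal one, `E`. An s-explanation meets every
s-diagnosis, and `E` can meet `D` only in `x`; hence `x ∈ E`.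
-/

/-- `D` is an s-diagnosis. -/
def SDiag {α : Type*} [DecidableEq α] (br : Finset α) (Bot : Finset α → Prop)
    (D : Finset α) : Prop :=
  D ⊆ br ∧ ¬ Bot (br \ D)

/-- `E` is an s-inconsistency explanation. -/
def SExpl {α : Type*} [DecidableEq α] (br : Finset α) (Bot : Finset α → Prop)
    (E : Finset α) : Prop :=
  E ⊆ br ∧ ∀ R, E ⊆ R → R ⊆ br → Bot R

open Finset

section

variable {α : Type*} [DecidableEq α] {br : Finset α} {Bot : Finset α → Prop}

lemma sDiag_sdiff_of_not_bot {R : Finset α} (hR : R ⊆ br) (hBot : ¬ Bot R) :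
    SDiag br Bot (br \ R) :=
  ⟨sdiff_subset, by rwa [Finset.sdiff_sdiff_eq_self hR]⟩

lemma SExpl.not_disjoint_of_sDiag {E D : Finset α} (hE : SExpl br Bot E)
    (hD : SDiag br Bot D) : ¬ Disjoint E D := fun hED =>
  hD.2 (hE.2 _ (subset_sdiff.2 ⟨hE.1, hED⟩) sdiff_subset)

lemma SExpl.exists_minimal_subset {E₀ : Finset α} (hE₀ : SExpl br Bot E₀) :
    ∃ E ⊆ E₀, SExpl br Bot E ∧ ∀ E', E' ⊆ E → SExpl br Bot E' → E' = E := by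
  obtain ⟨E, hEE₀, hE⟩ := exists_minimal_le_of_wellFoundedLT _ E₀ hE₀
  exact ⟨E, hEE₀, hE.prop, fun _ hE'E hE' => hE.eq_of_le hE' hE'E⟩

lemma SDiag.sExpl_sdiff_erase {D : Finset α} (hD : SDiag br Bot D)
    (hDmin : ∀ D', D' ⊆ D → SDiag br Bot D' → D' = D) {x : α} (hx : x ∈ D) :
    SExpl br Bot (br \ D.erase x) := by
  refine ⟨sdiff_subset, fun R hR hRbr => ?_⟩
  by_contra hBot
  have hsub : br \ R ⊆ D.erase x :=
    calc br \ R ⊆ br \ (br \ D.erase x) := sdiff_subset_sdiff subset_rfl hR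
      _ = D.erase x := Finset.sdiff_sdiff_eq_self ((erase_subset x D).trans hD.1)
  have hRD : br \ R = D :=
    hDmin _ (hsub.trans (erase_subset x D)) (sDiag_sdiff_of_not_bot hRbr hBot)
  exact notMem_erase x D (hsub (hRD ▸ hx))

lemma SDiag.exists_minimal_sExpl_mem {D : Finset α} (hD : SDiag br Bot D)
    (hDmin : ∀ D', D' ⊆ D → SDiag br Bot D' → D' = D) {x : α} (hx : x ∈ D) :
    ∃ E, SExpl br Bot E ∧ (∀ E', E' ⊆ E → SExpl br Bot E' → E' = E) ∧ x ∈ E := by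
  obtain ⟨E, hE_sub, hE, hEmin⟩ := (hD.sExpl_sdiff_erase hDmin hx).exists_minimal_subset
  obtain ⟨y, hyE, hyD⟩ := not_disjoint_iff.1 (hE.not_disjoint_of_sDiag hD)
  have hyx : y = x := by
    have := hE_sub hyE
    simp only [mem_sdiff, mem_erase, not_and] at this
    by_contra hne
    exact this.2 hne hyD
  exact ⟨E, hE, hEmin, hyx ▸ hyE⟩

end

theorem diag_union_subset_expl_union_general {α : Type*} [DecidableEq α]
    (br : Finset α) (Bot : Finset α → Prop) :
    (∀ D, SDiag br Bot D → (∀ D', D' ⊆ D → SDiag br Bot D' → D' = D) →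
      ∀ x ∈ D, ∃ E, SExpl br Bot E ∧ (∀ E', E' ⊆ E → SExpl br Bot E' → E' = E) ∧ x ∈ E) ∧
    {x : α | ∃ D, SDiag br Bot D ∧ (∀ D', D' ⊆ D → SDiag br Bot D' → D' = D) ∧ x ∈ D}
      ⊆ {x : α | ∃ E, SExpl br Bot E ∧ (∀ E', E' ⊆ E → SExpl br Bot E' → E' = E) ∧ x ∈ E} :=
  ⟨fun _ hD hDmin _ hx => hD.exists_minimal_sExpl_mem hDmin hx,
    fun _ ⟨_, hD, hDmin, hx⟩ => hD.exists_minimal_sExpl_mem hDmin hx⟩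

/-- if `D` is a minimal s-diagnosis then each `x ∈ D` belongs to some
minimal s-inconsistency explanation; consequently ⋃ D⁻_m(M) ⊆ ⋃ E⁺_m(M). -/
theorem diag_union_subset_expl_union {α : Type*} [DecidableEq α]
    (br : Finset α) (Bot : Finset α → Prop) (hbr : Bot br) (hemp : ¬ Bot ∅) :
    (∀ D, SDiag br Bot D → (∀ D', D' ⊆ D → SDiag br Bot D' → D' = D) →
      ∀ x ∈ D, ∃ E, SExpl br Bot E ∧ (∀ E', E' ⊆ E → SExpl br Bot E' → E' = E) ∧ x ∈ E) ∧
    {x : α | ∃ D, SDiag br Bot D ∧ (∀ D', D' ⊆ D → SDiag br Bot D' → D' = D) ∧ x ∈ D}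
      ⊆ {x : α | ∃ E, SExpl br Bot E ∧ (∀ E', E' ⊆ E → SExpl br Bot E' → E' = E) ∧ x ∈ E} :=
  diag_union_subset_expl_union_general br Bot
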